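/- Let r, s, i be integers with r ≥ 1, s ≥ 1, 0 ≤ i ≤ r-1. Then the number of pairs consisting of a chain i+1 ≤ l_1 ≤ l_2 ≤ ... ≤ l_i ≤ r together with a tuple (a_1,...,a_r) ∈ ℕ^r with Σ a_j = s+i having at least l_i nonzero entries equals C(r+s-1, s+i)·C(s+i-1, i). -/

import Mathlib

open Finset

lemma strictMono_gap {n : ℕ} {h : Fin n → ℕ} (hh : StrictMono h) :
    ∀ (m : ℕ) (j j' : Fin n), (j' : ℕ) = j + m → h j + m ≤ h j' := by
  intro m
  induction m with
  | zero =>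
    intro j j' hj
    have : j = j' := Fin.ext (by omega)
    subst this; omega
  | succ k ih =>
    intro j j' hj
    have hk : (j : ℕ) + k < n := by omega
    have h1 := ih j ⟨(j : ℕ) + k, hk⟩ rfl
    have h2 := hh (show (⟨(j : ℕ) + k, hk⟩ : Fin n) < j' from by
      rw [Fin.lt_def]; simp; omega)
    omega

lemma card_strictMono_fin (k M : ℕ) :
    Nat.card {g : Fin k → Fin M // StrictMono g} = M.choose k := by
  have e : {g : Fin k → Fin M // StrictMono g} ≃ {s : Finset (Fin M) // s.card = k} :=
    { toFun := fun g => ⟨Finset.univ.image g.1, by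
        rw [Finset.card_image_of_injective _ g.2.injective, Finset.card_univ, Fintype.card_fin]⟩
      invFun := fun s => ⟨s.1.orderEmbOfFin s.2, (s.1.orderEmbOfFin s.2).strictMono⟩
      left_inv := fun g => by
        apply Subtype.ext
        exact (Finset.orderEmbOfFin_unique _
          (fun x => Finset.mem_image_of_mem _ (Finset.mem_univ x)) g.2).symm
      right_inv := fun s => by
        apply Subtype.ext
        apply Finset.eq_of_subset_of_card_le
        · intro x hx
          rcases Finset.mem_image.1 hx with ⟨y, _, rfl⟩
          exact Finset.orderEmbOfFin_mem _ _ _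
        · rw [s.2, Finset.card_image_of_injective _ (s.1.orderEmbOfFin s.2).injective,
            Finset.card_univ, Fintype.card_fin] }
  rw [Nat.card_congr e, Nat.card_eq_fintype_card, Fintype.card_finset_len, Fintype.card_fin]

lemma card_chain (i t r : ℕ) (hi : 1 ≤ i) (ht : i + 1 ≤ t) (htr : t ≤ r) :
    Nat.card {l : Fin i → ℕ // Monotone l ∧ (∀ j, i + 1 ≤ l j ∧ l j ≤ r) ∧
      l ⟨i - 1, by omega⟩ ≤ t} = (t - 1).choose i := by
  rw [← card_strictMono_fin i (t - 1)]
  apply Nat.card_congr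
  have last : ∀ j : Fin i, j ≤ (⟨i - 1, by omega⟩ : Fin i) := by
    intro j; rw [Fin.le_def]; simp; omega
  refine
    { toFun := fun l => ⟨fun j => ⟨l.1 j - (i + 1) + j, ?_⟩, ?_⟩
      invFun := fun g => ⟨fun j => (g.1 j : ℕ) + (i + 1) - j, ?_, ?_, ?_⟩
      left_inv := ?_
      right_inv := ?_ }
  · -- bound
    have hmono := l.2.1
    have hb := l.2.2.1
    have hlast := l.2.2.2
    have h1 := (hb j).1
    have h2 : l.1 j ≤ t := le_trans (hmono (last j)) hlast
    have := j.2
    omega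
  · -- strictMono
    have hmono := l.2.1
    have hb := l.2.2.1
    intro j j' hjj
    simp only [Fin.mk_lt_mk]
    have := hmono (le_of_lt hjj)
    have := (hb j).1
    have hjj' : (j : ℕ) < j' := hjj
    omega
  · -- Monotone of inverse
    have hg := g.2
    intro j j' hjj
    simp only
    have hgap := strictMono_gap hg ((j' : ℕ) - j) j j' (by
      have : (j : ℕ) ≤ j' := hjj
      omega)
    omega
  · -- bounds of inverse
    have hg := g.2
    intro j
    simp only
    have hge : (j : ℕ) ≤ g.1 j := by
      have h0 : (0 : ℕ) < i := hi
      have := strictMono_gap hg (j : ℕ) ⟨0, h0⟩ j (by simp)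
      omega
    constructor
    · omega
    · have hlast := strictMono_gap hg ((i - 1) - (j : ℕ)) j ⟨i - 1, by omega⟩ (by simp; omega)
      have hb := (g.1 ⟨i - 1, by omega⟩).2
      have := j.2
      omega
  · -- last ≤ t
    have hg := g.2
    simp only
    have hb := (g.1 ⟨i - 1, by omega⟩).2
    omega
  · -- left_inv
    intro l
    have hb := l.2.2.1
    apply Subtype.ext
    funext j
    simp only
    have := (hb j).1
    have := j.2
    omega
  · -- right_inv
    intro g
    have hg := g.2
    apply Subtype.ext
    funext j
    apply Fin.ext
    simp only
    have hge : (j : ℕ) ≤ g.1 j := by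
      have h0 : (0 : ℕ) < i := hi
      have := strictMono_gap hg (j : ℕ) ⟨0, h0⟩ j (by simp)
      omega
    omega

lemma card_weak (k m : ℕ) :
    Nat.card {b : Fin k → ℕ // ∑ j, b j = m} = (k + m - 1).choose m := by
  have e : {b : Fin k → ℕ // ∑ j, b j = m} ≃ {b // b ∈ Finset.piAntidiag (univ : Finset (Fin k)) m} :=
    Equiv.subtypeEquivRight (by intro b; simp [Finset.mem_piAntidiag])
  rw [Nat.card_congr e, Nat.card_eq_finsetCard, ← Finset.map_sym_eq_piAntidiag,
    Finset.card_map, Finset.sym_univ, Finset.card_univ, Sym.card_sym_eq_multichoose,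
    Nat.multichoose_eq, Fintype.card_fin]

lemma orderIsoOfFin_congr {α : Type*} [LinearOrder α] {s s' : Finset α} (h : s = s')
    {k : ℕ} (hs : s.card = k) (hs' : s'.card = k) (j : Fin k) :
    (s.orderIsoOfFin hs j : α) = s'.orderIsoOfFin hs' j := by subst h; rfl

lemma card_fiber (r N t : ℕ) (ht : 1 ≤ t) (htN : t ≤ N) :
    Nat.card {a : Fin r → ℕ // (∑ j, a j = N) ∧
        (univ.filter fun j => a j ≠ 0).card = t}
      = r.choose t * (N - 1).choose (t - 1) := by
  classical
  have e : {a : Fin r → ℕ // (∑ j, a j = N) ∧ (univ.filter fun j => a j ≠ 0).card = t}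
      ≃ {T : Finset (Fin r) // T.card = t} × {b : Fin t → ℕ // ∑ j, b j = N - t} := by
    refine
      { toFun := fun a => ⟨⟨univ.filter fun j => a.1 j ≠ 0, a.2.2⟩,
          ⟨fun j => a.1 ((univ.filter fun j => a.1 j ≠ 0).orderIsoOfFin a.2.2 j : Fin r) - 1, ?_⟩⟩
        invFun := fun p => ⟨fun x => if hx : x ∈ p.1.1 then
            p.2.1 ((p.1.1.orderIsoOfFin p.1.2).symm ⟨x, hx⟩) + 1 else 0, ?_, ?_⟩
        left_inv := ?_
        right_inv := ?_ }
    · -- sum of b = N - t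
      obtain ⟨a, ha, hcard⟩ := a
      simp only
      set T := univ.filter fun j => a j ≠ 0 with hTdef
      set iso := T.orderIsoOfFin hcard with hiso
      have hmem : ∀ j : Fin t, 1 ≤ a (iso j : Fin r) := by
        intro j
        have h := (Finset.mem_filter.mp (iso j).2).2
        omega
      have h1 : ∑ j : Fin t, a (iso j : Fin r) = N := by
        have h2 := Equiv.sum_comp iso.toEquiv (fun x : {x // x ∈ T} => a x)
        simp only [RelIso.coe_fn_toEquiv] at h2
        rw [h2, Finset.sum_coe_sort T (fun x => a x), hTdef,
          Finset.sum_filter_ne_zero, ha]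
      have h2 : ∑ j : Fin t, (a (iso j : Fin r) - 1 + 1) = ∑ j : Fin t, a (iso j : Fin r) := by
        refine Finset.sum_congr rfl fun j _ => ?_
        have := hmem j
        omega
      rw [Finset.sum_add_distrib, Finset.sum_const, Finset.card_univ, Fintype.card_fin,
        smul_eq_mul, mul_one] at h2
      omega
    · -- sum of invFun = N
      obtain ⟨⟨T, hT⟩, ⟨b, hb⟩⟩ := p
      simp only
      rw [← Finset.sum_subset (Finset.subset_univ T) (by
        intro x _ hx
        rw [dif_neg hx])]
      rw [← Finset.sum_coe_sort T]
      have h2 : ∀ x : {x // x ∈ T},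
          (if hx : (x : Fin r) ∈ T then b ((T.orderIsoOfFin hT).symm ⟨x, hx⟩) + 1 else 0)
            = b ((T.orderIsoOfFin hT).symm x) + 1 := by
        intro x
        rw [dif_pos x.2]
      rw [Finset.sum_congr rfl fun x _ => h2 x]
      have h3 := Equiv.sum_comp (T.orderIsoOfFin hT).symm.toEquiv
        (fun j : Fin t => b j + 1)
      simp only [RelIso.coe_fn_toEquiv] at h3
      rw [h3, Finset.sum_add_distrib, hb, Finset.sum_const, Finset.card_univ,
        Fintype.card_fin, smul_eq_mul, mul_one]
      omega
    · -- support of invFun = T, so card = t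
      obtain ⟨⟨T, hT⟩, ⟨b, hb⟩⟩ := p
      simp only
      have h1 : (univ.filter fun x =>
          ¬(if hx : x ∈ T then b ((T.orderIsoOfFin hT).symm ⟨x, hx⟩) + 1 else 0) = 0) = T := by
        ext x
        by_cases hx : x ∈ T <;> simp [hx]
      rw [h1]; exact hT
    · -- left_inv
      intro a
      apply Subtype.ext
      funext x
      simp only
      by_cases hx : x ∈ univ.filter fun j => a.1 j ≠ 0
      · rw [dif_pos hx, OrderIso.apply_symm_apply]
        have : a.1 x ≠ 0 := (mem_filter.1 hx).2
        show a.1 x - 1 + 1 = a.1 x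
        omega
      · rw [dif_neg hx]
        have : ¬ a.1 x ≠ 0 := by
          intro h
          exact hx (mem_filter.2 ⟨mem_univ x, h⟩)
        omega
    · -- right_inv
      rintro ⟨⟨T, hT⟩, ⟨b, hb⟩⟩
      have hsupp : (univ.filter fun x =>
          ¬(if hx : x ∈ T then b ((T.orderIsoOfFin hT).symm ⟨x, hx⟩) + 1 else 0) = 0) = T := by
        ext x
        by_cases hx : x ∈ T <;> simp [hx]
      refine Prod.ext (Subtype.ext ?_) (Subtype.ext ?_)
      · exact hsupp
      · funext j
        simp only
        have hcongr := orderIsoOfFin_congr hsupp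
          (by rw [hsupp]; exact hT) hT j
        rw [hcongr]
        have hxm := (T.orderIsoOfFin hT j).2
        rw [dif_pos hxm]
        have : (⟨((T.orderIsoOfFin hT j : Fin r)), hxm⟩ : {x // x ∈ T})
            = T.orderIsoOfFin hT j := Subtype.ext rfl
        rw [this, OrderIso.symm_apply_apply]
        omega
  rw [Nat.card_congr e, Nat.card_prod, card_weak, Nat.card_eq_fintype_card,
    Fintype.card_finset_len, Fintype.card_fin]
  congr 1
  have h1 : t + (N - t) - 1 = N - 1 := by omega
  have h2 : N - t = (N - 1) - (t - 1) := by omega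
  rw [h1, h2, Nat.choose_symm (by omega)]

lemma key_sum (r s i : ℕ) (hs : 1 ≤ s) (hir : i + 1 ≤ r) :
    ∑ t ∈ Icc 1 r, r.choose t * ((s + i - 1).choose (t - 1) * (t - 1).choose i)
      = (r + s - 1).choose (s + i) * (s + i - 1).choose i := by
  -- drop t ≤ i terms
  have h0 : ∑ t ∈ Icc 1 r, r.choose t * ((s + i - 1).choose (t - 1) * (t - 1).choose i)
      = ∑ t ∈ Icc (i + 1) r, r.choose t * ((s + i - 1).choose (t - 1) * (t - 1).choose i) := by
    refine (Finset.sum_subset (fun t htm => ?_) (fun t htm htn => ?_)).symm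
    · rw [mem_Icc] at *; omega
    · rw [mem_Icc] at htm htn
      have : t - 1 < i := by omega
      rw [Nat.choose_eq_zero_of_lt this, mul_zero, mul_zero]
  rw [h0, ← Finset.Ico_add_one_right_eq_Icc, Finset.sum_Ico_eq_sum_range]
  have hri : r + 1 - (i + 1) = r - i := by omega
  rw [hri]
  -- rewrite each term
  have h1 : ∀ u ∈ range (r - i),
      r.choose (i + 1 + u) * ((s + i - 1).choose (i + 1 + u - 1) * (i + 1 + u - 1).choose i)
        = (s + i - 1).choose i * (r.choose (i + 1 + u) * (s - 1).choose u) := by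
    intro u hu
    have e1 : i + 1 + u - 1 = i + u := by omega
    rw [e1]
    by_cases hus : u ≤ s - 1
    · have := Nat.choose_mul (n := s + i - 1) (show i ≤ i + u by omega)
      rw [this]
      have e2 : s + i - 1 - i = s - 1 := by omega
      have e3 : i + u - i = u := by omega
      rw [e2, e3]; ring
    · rw [Nat.choose_eq_zero_of_lt (show s + i - 1 < i + u by omega),
        Nat.choose_eq_zero_of_lt (show s - 1 < u by omega)]
      ring
  rw [Finset.sum_congr rfl h1, ← Finset.mul_sum]
  -- Vandermonde
  have h2 : ∑ u ∈ range (r - i), r.choose (i + 1 + u) * (s - 1).choose u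
      = (r + s - 1).choose (s + i) := by
    have hv := Nat.add_choose_eq r (s - 1) (r - i - 1)
    rw [Nat.sum_antidiagonal_eq_sum_range_succ (fun a b => r.choose a * (s - 1).choose b)] at hv
    have e4 : (r - i - 1).succ = r - i := by omega
    rw [e4] at hv
    have h5 : ∑ v ∈ range (r - i), r.choose (r - i - 1 - v) * (s - 1).choose (r - i - 1 - (r - i - 1 - v))
        = ∑ v ∈ range (r - i), r.choose v * (s - 1).choose (r - i - 1 - v) :=
      Finset.sum_range_reflect (fun v => r.choose v * (s - 1).choose (r - i - 1 - v)) (r - i)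
    rw [← h5] at hv
    have h6 : ∀ v ∈ range (r - i),
        r.choose (r - i - 1 - v) * (s - 1).choose (r - i - 1 - (r - i - 1 - v))
          = r.choose (i + 1 + v) * (s - 1).choose v := by
      intro v hv'
      rw [mem_range] at hv'
      have e5 : r - i - 1 - (r - i - 1 - v) = v := by omega
      have e6 : r - i - 1 - v = r - (i + 1 + v) := by omega
      rw [e5, e6, Nat.choose_symm (by omega)]
    rw [Finset.sum_congr rfl h6] at hv
    have e7 : r + (s - 1) = r + s - 1 := by omega
    rw [e7] at hv
    rw [← hv]
    have e8 : r - i - 1 = (r + s - 1) - (s + i) := by omega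
    rw [e8, Nat.choose_symm (by omega)]
  rw [h2]; ring

lemma card_L (i t r : ℕ) (h1 : 1 ≤ t) (h2 : t ≤ r) :
    Nat.card {l : Fin i → ℕ // Monotone l ∧ (∀ j, i + 1 ≤ l j ∧ l j ≤ r) ∧
      (if h : 0 < i then l ⟨i - 1, by omega⟩ else 1) ≤ t} = (t - 1).choose i := by
  rcases Nat.eq_zero_or_pos i with hi0 | hip
  · subst hi0
    haveI : Unique {l : Fin 0 → ℕ // Monotone l ∧ (∀ j, 0 + 1 ≤ l j ∧ l j ≤ r) ∧
        (if h : 0 < 0 then l ⟨0 - 1, by omega⟩ else 1) ≤ t} :=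
      { default := ⟨fun j => j.elim0, fun {a} _ _ => a.elim0, fun j => j.elim0, by
          rw [dif_neg (lt_irrefl 0)]; exact h1⟩
        uniq := fun x => Subtype.ext (funext fun j => j.elim0) }
    rw [Nat.card_unique, Nat.choose_zero_right]
  · have e : {l : Fin i → ℕ // Monotone l ∧ (∀ j, i + 1 ≤ l j ∧ l j ≤ r) ∧
        (if h : 0 < i then l ⟨i - 1, by omega⟩ else 1) ≤ t}
        ≃ {l : Fin i → ℕ // Monotone l ∧ (∀ j, i + 1 ≤ l j ∧ l j ≤ r) ∧
        l ⟨i - 1, by omega⟩ ≤ t} :=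
      Equiv.subtypeEquivRight (fun l => by rw [dif_pos hip])
    rw [Nat.card_congr e]
    by_cases ht : i + 1 ≤ t
    · exact card_chain i t r hip ht h2
    · haveI : IsEmpty {l : Fin i → ℕ // Monotone l ∧ (∀ j, i + 1 ≤ l j ∧ l j ≤ r) ∧
          l ⟨i - 1, by omega⟩ ≤ t} := by
        constructor
        rintro ⟨l, hmono, hb, hlast⟩
        have := (hb ⟨i - 1, by omega⟩).1
        omega
      rw [Nat.card_of_isEmpty, Nat.choose_eq_zero_of_lt (by omega)]

lemma card_fiber_all (r N t : ℕ) (hN : 1 ≤ N) (ht : 1 ≤ t) :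
    Nat.card {a : Fin r → ℕ // (∑ j, a j = N) ∧
        (univ.filter fun j => a j ≠ 0).card = t}
      = r.choose t * (N - 1).choose (t - 1) := by
  by_cases htN : t ≤ N
  · exact card_fiber r N t ht htN
  · haveI : IsEmpty {a : Fin r → ℕ // (∑ j, a j = N) ∧
        (univ.filter fun j => a j ≠ 0).card = t} := by
      constructor
      rintro ⟨a, ha, hcard⟩
      have h1 : (univ.filter fun j => a j ≠ 0).card ≤ ∑ j ∈ univ.filter fun j => a j ≠ 0, a j := by
        rw [Finset.card_eq_sum_ones]
        refine Finset.sum_le_sum fun x hx => ?_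
        have := (mem_filter.1 hx).2
        omega
      have h2 : ∑ j ∈ univ.filter fun j => a j ≠ 0, a j ≤ ∑ j, a j :=
        Finset.sum_le_sum_of_subset (filter_subset _ _)
      omega
    rw [Nat.card_of_isEmpty, Nat.choose_eq_zero_of_lt (show N - 1 < t - 1 by omega), mul_zero]

theorem stmt3 (r s i : ℕ) (hr : 1 ≤ r) (hs : 1 ≤ s) (hi : i ≤ r - 1) :
    Nat.card {p : (Fin i → ℕ) × (Fin r → ℕ) //
      Monotone p.1 ∧ (∀ j, i + 1 ≤ p.1 j ∧ p.1 j ≤ r) ∧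
      (∑ j, p.2 j) = s + i ∧
      (if h : 0 < i then p.1 ⟨i - 1, by omega⟩ else 1) ≤
        (Finset.univ.filter fun j => p.2 j ≠ 0).card }
    = (r + s - 1).choose (s + i) * (s + i - 1).choose i := by
  classical
  have hir : i + 1 ≤ r := by omega
  let A := {a : Fin r → ℕ // ∑ j, a j = s + i}
  let L : ℕ → Type := fun t => {l : Fin i → ℕ // Monotone l ∧ (∀ j, i + 1 ≤ l j ∧ l j ≤ r) ∧
      (if h : 0 < i then l ⟨i - 1, by omega⟩ else 1) ≤ t}
  let tf : (Fin r → ℕ) → ℕ := fun a => (Finset.univ.filter fun j => a j ≠ 0).card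
  haveI finA : Finite A := by
    refine Finite.of_injective (fun a : A => (fun j => (⟨a.1 j, ?_⟩ : Fin (s + i + 1)))) ?_
    · have hle : a.1 j ≤ ∑ k, a.1 k :=
        Finset.single_le_sum (fun _ _ => Nat.zero_le _) (mem_univ j)
      have := a.2
      omega
    · intro a b h
      apply Subtype.ext; funext j
      have := congrFun h j
      simpa [Fin.mk.injEq] using this
  haveI finL : ∀ t, Finite (L t) := by
    intro t
    refine Finite.of_injective (fun l : L t => (fun j => (⟨l.1 j, ?_⟩ : Fin (r + 1)))) ?_
    · have := (l.2.2.1 j).2; omega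
    · intro a b h
      apply Subtype.ext; funext j
      have := congrFun h j
      simpa [Fin.mk.injEq] using this
  have E1 : {p : (Fin i → ℕ) × (Fin r → ℕ) //
      Monotone p.1 ∧ (∀ j, i + 1 ≤ p.1 j ∧ p.1 j ≤ r) ∧
      (∑ j, p.2 j) = s + i ∧
      (if h : 0 < i then p.1 ⟨i - 1, by omega⟩ else 1) ≤
        (Finset.univ.filter fun j => p.2 j ≠ 0).card } ≃ Σ a : A, L (tf a.1) :=
    { toFun := fun p => ⟨⟨p.1.2, p.2.2.2.1⟩, ⟨p.1.1, p.2.1, p.2.2.1, p.2.2.2.2⟩⟩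
      invFun := fun q => ⟨(q.2.1, q.1.1), q.2.2.1, q.2.2.2.1, q.1.2, q.2.2.2.2⟩
      left_inv := fun p => rfl
      right_inv := fun q => rfl }
  rw [Nat.card_congr E1]
  haveI : Fintype A := Fintype.ofFinite A
  letI fL : ∀ a : A, Fintype (L (tf a.1)) := fun a => Fintype.ofFinite _
  rw [Nat.card_eq_fintype_card, Fintype.card_sigma]
  simp only [← Nat.card_eq_fintype_card]
  have htf : ∀ a : A, tf a.1 ∈ Icc 1 r := by
    intro a
    rw [mem_Icc]
    constructor
    · by_contra h
      have h0 : tf a.1 = 0 := by omega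
      rw [Finset.card_eq_zero] at h0
      have hz : ∀ j, a.1 j = 0 := by
        intro j
        by_contra hj
        have hm : j ∈ Finset.univ.filter (fun j => a.1 j ≠ 0) := mem_filter.2 ⟨mem_univ _, hj⟩
        rw [h0] at hm
        exact absurd hm (notMem_empty j)
      have hsum : ∑ j, a.1 j = 0 := Finset.sum_eq_zero fun j _ => hz j
      have h2 := a.2
      omega
    · exact (Finset.card_filter_le _ _).trans (by simp)
  rw [← Finset.sum_fiberwise_of_maps_to (fun a _ => htf a)
    (fun a : A => Nat.card (L (tf a.1)))]
  rw [← key_sum r s i hs hir]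
  refine Finset.sum_congr rfl fun y hy => ?_
  rw [mem_Icc] at hy
  have hinner : ∀ a ∈ Finset.univ.filter (fun a : A => tf a.1 = y),
      Nat.card (L (tf a.1)) = Nat.card (L y) := by
    intro a ha
    rw [(mem_filter.1 ha).2]
  rw [Finset.sum_congr rfl hinner, Finset.sum_const, smul_eq_mul]
  have hcard : (Finset.univ.filter (fun a : A => tf a.1 = y)).card
      = r.choose y * ((s + i - 1).choose (y - 1)) := by
    rw [← Fintype.card_subtype, ← Nat.card_eq_fintype_card,
      Nat.card_congr (Equiv.subtypeSubtypeEquivSubtypeInter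
        (fun a : Fin r → ℕ => ∑ j, a j = s + i) (fun a => tf a = y))]
    exact card_fiber_all r (s + i) y (by omega) hy.1
  rw [hcard, card_L i y r hy.1 hy.2, mul_assoc]
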